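/- arXiv:1307.3478 — 2 statements merged into one kernel-verified Lean document; each statement's English description precedes it below -/
import Mathlib

section
/- For t > 0 and k ≠ 0, the nonzero eigenvalues of the operator k²A on L²([0,t);ℂ), where (Af)(s) = ∫_s^t ∫_0^r f(τ) dτ dr, are exactly λ_n = k² t² / ((n - 1/2)² π²) for n = 1, 2, 3, ..., each with one-dimensional eigenspace spanned by s ↦ cos((n - 1/2)π s / t). -/
/-! If `f = ω² A f`, then `g = ω² ∫ₛᵗ ∫₀ʳ f` is a version of `f` with `g'' = -ω² g`, `g'(0) = 0`
and `g(t) = 0` on `[0, t]`; hence `g = g(0) cos(ω s)`, and `g ≠ 0` forces `cos(ω t) = 0`, i.e.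
`ω t = (n - 1/2) π`. Conversely, `cos((n - 1/2) π s / t)` is an eigenfunction by direct
integration. -/

open MeasureTheory Real Set Filter

section Calculus

variable {E : Type*} [NormedAddCommGroup E] [NormedSpace ℝ E]

lemma eqOn_Icc_of_hasDerivWithinAt_zero {f : ℝ → E} {a b : ℝ}
    (hf : ∀ x ∈ Icc a b, HasDerivWithinAt f 0 (Icc a b) x) : ∀ x ∈ Icc a b, f x = f a := by
  intro x hx
  have := norm_image_sub_le_of_norm_deriv_le_segment' hf (fun _ _ => norm_zero.le) x hx
  rwa [zero_mul, norm_le_zero_iff, sub_eq_zero] at this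

variable [CompleteSpace E]

lemma hasDerivWithinAt_integral_Icc_right {f : ℝ → E} {a b x : ℝ}
    (hf : ContinuousOn f (Icc a b)) (hx : x ∈ Icc a b) :
    HasDerivWithinAt (fun u => ∫ y in a..u, f y) (f x) (Icc a b) x := by
  have : Fact (x ∈ Icc a b) := ⟨hx⟩
  exact intervalIntegral.integral_hasDerivWithinAt_right
    (hf.mono (uIcc_subset_Icc (left_mem_Icc.2 (hx.1.trans hx.2)) hx)).intervalIntegrable
    (hf.stronglyMeasurableAtFilter_nhdsWithin measurableSet_Icc x) (hf x hx)

lemma hasDerivWithinAt_integral_Icc_left {f : ℝ → E} {a b x : ℝ}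
    (hf : ContinuousOn f (Icc a b)) (hx : x ∈ Icc a b) :
    HasDerivWithinAt (fun u => ∫ y in u..b, f y) (-f x) (Icc a b) x := by
  have : Fact (x ∈ Icc a b) := ⟨hx⟩
  exact intervalIntegral.integral_hasDerivWithinAt_left
    (hf.mono (uIcc_subset_Icc hx (right_mem_Icc.2 (hx.1.trans hx.2)))).intervalIntegrable
    (hf.stronglyMeasurableAtFilter_nhdsWithin measurableSet_Icc x) (hf x hx)

end Calculus

lemma hasDerivAt_cos_mul (ω : ℂ) (x : ℝ) :
    HasDerivAt (fun y : ℝ => Complex.cos (ω * y)) (-Complex.sin (ω * x) * ω) x := by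
  simpa using (((hasDerivAt_id (x : ℂ)).const_mul ω).ccos).comp_ofReal

lemma hasDerivAt_sin_mul (ω : ℂ) (x : ℝ) :
    HasDerivAt (fun y : ℝ => Complex.sin (ω * y)) (Complex.cos (ω * x) * ω) x := by
  simpa using (((hasDerivAt_id (x : ℂ)).const_mul ω).csin).comp_ofReal

/-- `g cos + ω F sin` and `g sin - ω F cos` are constant, and `g` is their combination with
`cos` and `sin`. -/
lemma eq_mul_cos_of_hasDerivWithinAt {g F : ℝ → ℂ} {ω : ℂ} {b : ℝ}
    (hg : ∀ x ∈ Icc 0 b, HasDerivWithinAt g (-ω ^ 2 * F x) (Icc 0 b) x)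
    (hF : ∀ x ∈ Icc 0 b, HasDerivWithinAt F (g x) (Icc 0 b) x) (hF0 : F 0 = 0) :
    ∀ x ∈ Icc 0 b, g x = g 0 * Complex.cos (ω * x) := by
  set E₁ : ℝ → ℂ := fun x => g x * Complex.cos (ω * x) + ω * F x * Complex.sin (ω * x)
  set E₂ : ℝ → ℂ := fun x => g x * Complex.sin (ω * x) - ω * F x * Complex.cos (ω * x)
  have hE₁ : ∀ x ∈ Icc 0 b, HasDerivWithinAt E₁ 0 (Icc 0 b) x := fun x hx => by
    refine (((hg x hx).mul (hasDerivAt_cos_mul ω x).hasDerivWithinAt).add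
      (((hF x hx).const_mul ω).mul (hasDerivAt_sin_mul ω x).hasDerivWithinAt)).congr_deriv ?_
    ring
  have hE₂ : ∀ x ∈ Icc 0 b, HasDerivWithinAt E₂ 0 (Icc 0 b) x := fun x hx => by
    refine (((hg x hx).mul (hasDerivAt_sin_mul ω x).hasDerivWithinAt).sub
      (((hF x hx).const_mul ω).mul (hasDerivAt_cos_mul ω x).hasDerivWithinAt)).congr_deriv ?_
    ring
  intro x hx
  have h₁ : E₁ x = g 0 := by simpa [E₁, hF0] using eqOn_Icc_of_hasDerivWithinAt_zero hE₁ x hx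
  have h₂ : E₂ x = 0 := by simpa [E₂, hF0] using eqOn_Icc_of_hasDerivWithinAt_zero hE₂ x hx
  linear_combination Complex.cos (ω * x) * h₁ + Complex.sin (ω * x) * h₂
    - g x * Complex.sin_sq_add_cos_sq (ω * x)

lemma intervalIntegral_congr_of_ae_restrict_Ico {E : Type*} [NormedAddCommGroup E]
    [NormedSpace ℝ E] {f g : ℝ → E} {a b r : ℝ} (h : f =ᵐ[volume.restrict (Ico a b)] g)
    (hr : r ∈ Icc a b) : ∫ x in a..r, f x = ∫ x in a..r, g x := by
  rw [Measure.restrict_congr_set Ico_ae_eq_Icc] at h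
  refine intervalIntegral.integral_congr_ae
    (((ae_restrict_iff' measurableSet_Icc).1 h).mono fun x hx hxr => hx ?_)
  rw [uIoc_of_le hr.1] at hxr
  exact ⟨hxr.1.le, hxr.2.trans hr.2⟩

lemma integral_integral_congr_of_ae_restrict_Ico {E : Type*} [NormedAddCommGroup E]
    [NormedSpace ℝ E] {f g : ℝ → E} {t s : ℝ} (h : f =ᵐ[volume.restrict (Ico 0 t)] g)
    (hs : s ∈ Icc 0 t) :
    ∫ r in s..t, ∫ τ in (0:ℝ)..r, f τ = ∫ r in s..t, ∫ τ in (0:ℝ)..r, g τ := by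
  refine intervalIntegral.integral_congr fun r hr => ?_
  rw [uIcc_of_le hs.2] at hr
  exact intervalIntegral_congr_of_ae_restrict_Ico h ⟨hs.1.trans hr.1, hr.2⟩

lemma ae_eq_mul_cos_of_ae_eq_sq_mul_integral_integral {f : ℝ → ℂ} {ω : ℂ} {t : ℝ}
    (ht : 0 ≤ t) (hfi : IntervalIntegrable f volume 0 t)
    (hf : f =ᵐ[volume.restrict (Ico 0 t)]
      fun s => ω ^ 2 * ∫ r in s..t, ∫ τ in (0:ℝ)..r, f τ) :
    ∃ c : ℂ, (f =ᵐ[volume.restrict (Ico 0 t)] fun s => c * Complex.cos (ω * s)) ∧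
      c * Complex.cos (ω * t) = 0 := by
  set F : ℝ → ℂ := fun r => ∫ τ in (0:ℝ)..r, f τ
  set g : ℝ → ℂ := fun s => ω ^ 2 * ∫ r in s..t, F r
  have hF_cont : ContinuousOn F (Icc 0 t) := by
    simpa [uIcc_of_le ht] using intervalIntegral.continuousOn_primitive_interval' hfi left_mem_uIcc
  have hg : ∀ x ∈ Icc 0 t, HasDerivWithinAt g (-ω ^ 2 * F x) (Icc 0 t) x := fun x hx => by
    simpa using (hasDerivWithinAt_integral_Icc_left hF_cont hx).const_mul (ω ^ 2)
  have hF : ∀ x ∈ Icc 0 t, HasDerivWithinAt F (g x) (Icc 0 t) x := fun x hx =>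
    (hasDerivWithinAt_integral_Icc_right (fun y hy => (hg y hy).continuousWithinAt) hx).congr
      (fun y hy => intervalIntegral_congr_of_ae_restrict_Ico hf hy)
      (intervalIntegral_congr_of_ae_restrict_Ico hf hx)
  have hg_cos := eq_mul_cos_of_hasDerivWithinAt hg hF intervalIntegral.integral_same
  refine ⟨g 0, ?_, ?_⟩
  · filter_upwards [hf, ae_restrict_mem measurableSet_Ico] with s hs hmem
    exact hs.trans (hg_cos s (Ico_subset_Icc_self hmem))
  · simpa [g] using (hg_cos t ⟨ht, le_rfl⟩).symm

lemma sq_mul_integral_integral_cos {ω : ℂ} (hω : ω ≠ 0) (s t : ℝ) :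
    ω ^ 2 * ∫ r in s..t, ∫ τ in (0:ℝ)..r, Complex.cos (ω * τ) =
      Complex.cos (ω * s) - Complex.cos (ω * t) := by
  have hinner : ∀ r : ℝ, ∫ τ in (0:ℝ)..r, Complex.cos (ω * τ) = Complex.sin (ω * r) / ω := by
    intro r
    rw [intervalIntegral.integral_eq_sub_of_hasDerivAt
      (f := fun y : ℝ => Complex.sin (ω * y) / ω)
      (fun x _ => ((hasDerivAt_sin_mul ω x).div_const ω).congr_deriv (by field_simp))
      ((by fun_prop : Continuous fun τ : ℝ => Complex.cos (ω * τ)).intervalIntegrable _ _)]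
    simp
  simp_rw [hinner]
  rw [intervalIntegral.integral_eq_sub_of_hasDerivAt
    (f := fun y : ℝ => -Complex.cos (ω * y) / ω ^ 2)
    (fun x _ => ((hasDerivAt_cos_mul ω x).neg.div_const (ω ^ 2)).congr_deriv (by field_simp))
    ((by fun_prop : Continuous fun r : ℝ => Complex.sin (ω * r) / ω).intervalIntegrable _ _)]
  field_simp
  ring

lemma exists_nat_two_mul_sub_one_sq_eq (m : ℤ) :
    ∃ n : ℕ, 1 ≤ n ∧ (2 * (n : ℤ) - 1) ^ 2 = (2 * m + 1) ^ 2 := by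
  obtain ⟨n, rfl | rfl⟩ := m.eq_nat_or_neg
  · exact ⟨n + 1, by omega, by push_cast; ring⟩
  · rcases n with _ | n
    · exact ⟨1, le_rfl, by norm_num⟩
    · exact ⟨n + 1, by omega, by push_cast; ring⟩

lemma exists_eq_of_sq_mul_eq_of_cos_mul_eq_zero {ω lam : ℂ} {k t : ℝ}
    (hω : ω ^ 2 * lam = k ^ 2) (hcos : Complex.cos (ω * t) = 0) :
    ∃ n : ℕ, 1 ≤ n ∧ lam = ((k ^ 2 * t ^ 2 / (((n : ℝ) - 1 / 2) ^ 2 * π ^ 2) : ℝ) : ℂ) := by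
  have hωt : ω * t ≠ 0 := fun h => by simp [h] at hcos
  obtain ⟨m, hm⟩ := Complex.cos_eq_zero_iff.1 hcos
  obtain ⟨n, hn, hnm⟩ := exists_nat_two_mul_sub_one_sq_eq m
  refine ⟨n, hn, ?_⟩
  have hnm' : (2 * (n : ℂ) - 1) ^ 2 = (2 * m + 1) ^ 2 := by exact_mod_cast hnm
  have hωt_sq : ((n : ℂ) - 1 / 2) ^ 2 * π ^ 2 = (ω * t) ^ 2 := by
    linear_combination (π : ℂ) ^ 2 / 4 * hnm' - (ω * t + (2 * m + 1) * π / 2) * hm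
  push_cast
  rw [hωt_sq, eq_div_iff (pow_ne_zero 2 hωt)]
  linear_combination (t : ℂ) ^ 2 * hω

noncomputable def eigenfrequency (t : ℝ) (n : ℕ) : ℝ := ((n : ℝ) - 1 / 2) * π / t

lemma cos_eigenfrequency_mul_eq_zero {t : ℝ} (ht : t ≠ 0) (n : ℕ) :
    Real.cos (eigenfrequency t n * t) = 0 := by
  rw [eigenfrequency, div_mul_cancel₀ _ ht, Real.cos_eq_zero_iff]
  exact ⟨n - 1, by push_cast; ring⟩

lemma eigenfrequency_sq_mul (k : ℝ) {t : ℝ} (ht : t ≠ 0) (n : ℕ) :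
    ((eigenfrequency t n : ℂ)) ^ 2 * ((k ^ 2 * t ^ 2 / (((n : ℝ) - 1 / 2) ^ 2 * π ^ 2) : ℝ) : ℂ)
      = (k : ℂ) ^ 2 := by
  have hn : (n : ℝ) * 2 - 1 ≠ 0 := by
    intro h
    have : ((n * 2 : ℕ) : ℝ) = 1 := by push_cast; linarith
    norm_cast at this
    omega
  rw [eigenfrequency]
  norm_cast
  field_simp

lemma smul_eq_smul_iff_eq_smul {K M : Type*} [Field K] [AddCommGroup M] [Module K M]
    {a b c : K} (hb : b ≠ 0) (h : c * b = a) {x y : M} : a • x = b • y ↔ y = c • x := by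
  rw [← h, mul_comm, mul_smul, smul_right_inj hb, eq_comm]

lemma MeasureTheory.Lp.intervalIntegrable_of_restrict_Ico {E : Type*} [NormedAddCommGroup E]
    {p : ENNReal} [Fact (1 ≤ p)] {a b : ℝ} (hab : a ≤ b)
    (f : Lp E p (volume.restrict (Ico a b))) : IntervalIntegrable f volume a b := by
  rw [intervalIntegrable_iff_integrableOn_Ioc_of_le hab, ← integrableOn_Icc_iff_integrableOn_Ioc,
    integrableOn_Icc_iff_integrableOn_Ico]
  exact (Lp.memLp f).integrable Fact.out

section IntegralOperator

variable {t : ℝ}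

lemma eq_smul_iff_ae_eq_mul_integral_integral
    {A : Lp ℂ 2 (volume.restrict (Ico (0:ℝ) t)) → Lp ℂ 2 (volume.restrict (Ico (0:ℝ) t))}
    (hA : ∀ f : Lp ℂ 2 (volume.restrict (Ico (0:ℝ) t)),
      ∀ᵐ s ∂(volume.restrict (Ico (0:ℝ) t)), A f s = ∫ r in s..t, ∫ τ in (0:ℝ)..r, f τ)
    (c : ℂ) (f : Lp ℂ 2 (volume.restrict (Ico (0:ℝ) t))) :
    f = c • A f ↔ f =ᵐ[volume.restrict (Ico (0:ℝ) t)]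
      fun s => c * ∫ r in s..t, ∫ τ in (0:ℝ)..r, f τ := by
  rw [Lp.ext_iff]
  refine EventuallyEq.congr_right ?_
  filter_upwards [Lp.coeFn_smul c (A f), hA f] with s hsmul hAs
  rw [hsmul, Pi.smul_apply, hAs, smul_eq_mul]

lemma exists_ne_zero_ae_eq_sq_mul_integral_integral (ht : 0 ≤ t) {ω : ℝ}
    (hcos : Real.cos (ω * t) = 0) :
    ∃ f : Lp ℂ 2 (volume.restrict (Ico (0:ℝ) t)), f ≠ 0 ∧
      f =ᵐ[volume.restrict (Ico (0:ℝ) t)]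
        fun s => (ω : ℂ) ^ 2 * ∫ r in s..t, ∫ τ in (0:ℝ)..r, f τ := by
  have hω : (ω : ℂ) ≠ 0 := by
    rintro hω
    simp [Complex.ofReal_eq_zero.1 hω] at hcos
  have hcos' : Complex.cos (ω * t) = 0 := by exact_mod_cast hcos
  set φ : ℝ → ℂ := fun s => Complex.cos (ω * s)
  have hφ_eq : ∀ s : ℝ, (ω : ℂ) ^ 2 * ∫ r in s..t, ∫ τ in (0:ℝ)..r, φ τ = φ s := fun s => by
    rw [sq_mul_integral_integral_cos hω, hcos', sub_zero]
  have hφ : MemLp φ 2 (volume.restrict (Ico (0:ℝ) t)) := by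
    refine (memLp_top_of_bound (by fun_prop : Continuous φ).aestronglyMeasurable 1
      (ae_of_all _ fun s => ?_)).mono_exponent le_top
    rw [show φ s = Complex.cos (ω * s) from rfl, ← Complex.ofReal_mul, ← Complex.ofReal_cos,
      Complex.norm_real, Real.norm_eq_abs]
    exact abs_cos_le_one _
  have hcoe := hφ.coeFn_toLp
  refine ⟨hφ.toLp φ, fun h0 => ?_, ?_⟩
  · have hφ0 : φ =ᵐ[volume.restrict (Ico (0:ℝ) t)] 0 :=
      hcoe.symm.trans (Lp.eq_zero_iff_ae_eq_zero.1 h0)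
    have h := hφ_eq 0
    rw [integral_integral_congr_of_ae_restrict_Ico hφ0 (left_mem_Icc.2 ht)] at h
    simp [φ] at h
  · filter_upwards [hcoe, ae_restrict_mem measurableSet_Ico] with s hs hmem
    rw [hs, integral_integral_congr_of_ae_restrict_Ico hcoe (Ico_subset_Icc_self hmem), hφ_eq]

end IntegralOperator

theorem stmt_3_general (t k : ℝ) (ht : 0 < t)
    (A : Lp ℂ 2 (volume.restrict (Set.Ico (0:ℝ) t)) →L[ℂ]
         Lp ℂ 2 (volume.restrict (Set.Ico (0:ℝ) t)))
    (hA : ∀ f : Lp ℂ 2 (volume.restrict (Set.Ico (0:ℝ) t)),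
      ∀ᵐ s ∂(volume.restrict (Set.Ico (0:ℝ) t)),
        A f s = ∫ r in s..t, (∫ τ in (0:ℝ)..r, f τ)) :
    ∀ lam : ℂ, lam ≠ 0 →
      ((∃ f, f ≠ 0 ∧ ((k:ℂ)^2) • A f = lam • f) ↔
        ∃ n : ℕ, 1 ≤ n ∧ lam = ((k^2 * t^2 / (((n:ℝ) - 1/2)^2 * π^2) : ℝ) : ℂ)) ∧
      (∀ n : ℕ, 1 ≤ n → lam = ((k^2 * t^2 / (((n:ℝ) - 1/2)^2 * π^2) : ℝ) : ℂ) →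
        ∀ f, ((k:ℂ)^2) • A f = lam • f →
          ∃ c : ℂ, ∀ᵐ s ∂(volume.restrict (Set.Ico (0:ℝ) t)),
            f s = c * Complex.cos (((((n:ℝ) - 1/2) * π * s / t : ℝ) : ℂ))) := by
  intro lam hlam
  have heigen : ∀ ω : ℂ, ω ^ 2 * lam = k ^ 2 → ∀ f, (k : ℂ) ^ 2 • A f = lam • f ↔
      f =ᵐ[volume.restrict (Ico (0:ℝ) t)]
        fun s => ω ^ 2 * ∫ r in s..t, ∫ τ in (0:ℝ)..r, f τ := fun ω hω f =>
    (smul_eq_smul_iff_eq_smul hlam hω).trans (eq_smul_iff_ae_eq_mul_integral_integral hA _ f)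
  have hω_n : ∀ n : ℕ, lam = ((k^2 * t^2 / (((n:ℝ) - 1/2)^2 * π^2) : ℝ) : ℂ) →
      (eigenfrequency t n : ℂ) ^ 2 * lam = k ^ 2 := fun n hn =>
    hn ▸ eigenfrequency_sq_mul k ht.ne' n
  obtain ⟨ω, hω⟩ : ∃ ω : ℂ, ω ^ 2 * lam = k ^ 2 :=
    (IsAlgClosed.exists_pow_nat_eq ((k : ℂ) ^ 2 / lam) two_pos).imp fun ω h => by
      rw [h, div_mul_cancel₀ _ hlam]
  refine ⟨⟨fun ⟨f, hf0, hf⟩ => ?_, fun ⟨n, _, hlam_n⟩ => ?_⟩, fun n _ hlam_n f hf => ?_⟩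
  · obtain ⟨c, hfc, hc⟩ := ae_eq_mul_cos_of_ae_eq_sq_mul_integral_integral ht.le
      (Lp.intervalIntegrable_of_restrict_Ico ht.le f)
      ((heigen ω hω f).1 hf)
    have hc0 : c ≠ 0 := by
      rintro rfl
      exact hf0 (Lp.eq_zero_iff_ae_eq_zero.2
        (hfc.trans (Eventually.of_forall fun _ => zero_mul _)))
    exact exists_eq_of_sq_mul_eq_of_cos_mul_eq_zero hω ((mul_eq_zero.1 hc).resolve_left hc0)
  · obtain ⟨f, hf0, hf⟩ :=
      exists_ne_zero_ae_eq_sq_mul_integral_integral ht.le (cos_eigenfrequency_mul_eq_zero ht.ne' n)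
    exact ⟨f, hf0, (heigen _ (hω_n n hlam_n) f).2 hf⟩
  · obtain ⟨c, hfc, -⟩ := ae_eq_mul_cos_of_ae_eq_sq_mul_integral_integral ht.le
      (Lp.intervalIntegrable_of_restrict_Ico ht.le f)
      ((heigen _ (hω_n n hlam_n) f).1 hf)
    refine ⟨c, hfc.mono fun s hs => hs.trans ?_⟩
    rw [eigenfrequency]
    push_cast
    ring_nf

/-- For `t > 0` and `k ≠ 0`, the nonzero eigenvalues of `k² A` on
`L²([0,t); ℂ)`, where `(A f)(s) = ∫_s^t ∫_0^r f(τ) dτ dr`, are exactly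
`λ_n = k² t² / ((n - 1/2)² π²)`, `n = 1, 2, 3, …`, each with one-dimensional
eigenspace spanned by `s ↦ cos((n - 1/2) π s / t)`. -/
theorem stmt_3 (t k : ℝ) (ht : 0 < t) (hk : k ≠ 0)
    (A : Lp ℂ 2 (volume.restrict (Set.Ico (0:ℝ) t)) →L[ℂ]
         Lp ℂ 2 (volume.restrict (Set.Ico (0:ℝ) t)))
    (hA : ∀ f : Lp ℂ 2 (volume.restrict (Set.Ico (0:ℝ) t)),
      ∀ᵐ s ∂(volume.restrict (Set.Ico (0:ℝ) t)),
        A f s = ∫ r in s..t, (∫ τ in (0:ℝ)..r, f τ)) :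
    ∀ lam : ℂ, lam ≠ 0 →
      ((∃ f, f ≠ 0 ∧ ((k:ℂ)^2) • A f = lam • f) ↔
        ∃ n : ℕ, 1 ≤ n ∧ lam = ((k^2 * t^2 / (((n:ℝ) - 1/2)^2 * π^2) : ℝ) : ℂ)) ∧
      (∀ n : ℕ, 1 ≤ n → lam = ((k^2 * t^2 / (((n:ℝ) - 1/2)^2 * π^2) : ℝ) : ℂ) →
        ∀ f, ((k:ℂ)^2) • A f = lam • f →
          ∃ c : ℂ, ∀ᵐ s ∂(volume.restrict (Set.Ico (0:ℝ) t)),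
            f s = c * Complex.cos (((((n:ℝ) - 1/2) * π * s / t : ℝ) : ℂ))) :=
  stmt_3_general t k ht A hA
end

section
/- Let K be a symmetric trace class operator on a real Hilbert space H with -1/2 < K ≤ 0, and let μ be the standard Gaussian measure associated to H (white noise measure). Then ∫ exp(-⟨ω, Kω⟩) dμ(ω) = det(Id + 2K)^{-1/2}, where the quadratic form ⟨ω, Kω⟩ is defined via an eigenbasis expansion and det is the Fredholm determinant. -/
/-!
Each coordinate contributes `E[exp(-k X²)] = (1 + 2k)^(-1/2)`, a one-dimensional Gaussian
integral, and independence factors the truncated integrals into finite products. Since `k ≤ 0`,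
the exponents `-∑_{n<N} k n X n²` increase with `N`; by monotone convergence the supremum of the
integrands has integral `(∏ (1 + 2 k n))^(-1/2) < ∞`. Hence the supremum is finite a.e., so the
series converges a.e. and the supremum equals `exp(-∑ k n X n²)`.
-/

open MeasureTheory ProbabilityTheory Real Filter Finset Topology
open scoped ENNReal

lemma integral_exp_neg_mul_sq_gaussianReal {c : ℝ} (hc : -(1/2 : ℝ) < c) :
    ∫ x, rexp (-(c * x ^ 2)) ∂gaussianReal 0 1 = (1 + 2 * c) ^ (-(1/2 : ℝ)) := by
  have hc' : 0 < 1 + 2 * c := by linarith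
  have hdensity : ∀ x : ℝ, gaussianPDFReal 0 1 x • rexp (-(c * x ^ 2))
      = (√(2 * π))⁻¹ * rexp (-((1 + 2 * c) / 2) * x ^ 2) := fun x ↦ by
    simp only [gaussianPDFReal, smul_eq_mul, NNReal.coe_one, mul_one, sub_zero, mul_assoc,
      ← Real.exp_add]
    ring_nf
  simp_rw [integral_gaussianReal_eq_integral_smul one_ne_zero, hdensity, integral_const_mul,
    integral_gaussian, rpow_neg hc'.le, ← sqrt_eq_rpow, div_div_eq_mul_div, sqrt_div' _ hc'.le,
    mul_comm π 2]
  field_simp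

lemma lintegral_ofReal_exp_neg_mul_sq_gaussianReal {c : ℝ} (hc : -(1/2 : ℝ) < c) :
    ∫⁻ x, ENNReal.ofReal (rexp (-(c * x ^ 2))) ∂gaussianReal 0 1
      = ENNReal.ofReal ((1 + 2 * c) ^ (-(1/2 : ℝ))) := by
  -- a non-integrable function would have Bochner integral `0`
  have hint : Integrable (fun x ↦ rexp (-(c * x ^ 2))) (gaussianReal 0 1) := by
    refine Integrable.of_integral_ne_zero ?_
    rw [integral_exp_neg_mul_sq_gaussianReal hc]
    exact (rpow_pos_of_pos (by linarith) _).ne'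
  rw [← ofReal_integral_eq_lintegral_ofReal hint (ae_of_all _ fun _ ↦ (exp_pos _).le),
    integral_exp_neg_mul_sq_gaussianReal hc]

lemma tendsto_prod_range_rpow_tprod {f : ℕ → ℝ} (hf : ∀ n, 0 < f n)
    (hsum : Summable fun n ↦ f n - 1) (p : ℝ) :
    Tendsto (fun N ↦ ∏ n ∈ range N, f n ^ p) atTop (𝓝 ((∏' n, f n) ^ p)) := by
  have hlog : Summable fun n ↦ log (f n) := by
    simpa using Real.summable_log_one_add_of_summable hsum
  have hprod := Real.hasProd_of_hasSum_log hf hlog.hasSum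
  simp_rw [fun N ↦ Real.finsetProd_rpow (range N) f (fun n _ ↦ (hf n).le) p, hprod.tprod_eq]
  exact ((continuousAt_rpow_const _ p (Or.inl (exp_pos _).ne')).tendsto).comp
    hprod.tendsto_prod_nat

lemma monotone_ofReal_exp_sum_range {a : ℕ → ℝ} (ha : ∀ n, 0 ≤ a n) :
    Monotone fun N ↦ ENNReal.ofReal (rexp (∑ n ∈ range N, a n)) :=
  fun _ _ hMN ↦ ENNReal.ofReal_le_ofReal <| exp_le_exp.2 <|
    sum_le_sum_of_subset_of_nonneg (range_mono hMN) fun n _ _ ↦ ha n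

lemma iSup_ofReal_exp_sum_range_of_nonneg {a : ℕ → ℝ} (ha : ∀ n, 0 ≤ a n)
    (hfin : ⨆ N, ENNReal.ofReal (rexp (∑ n ∈ range N, a n)) ≠ ⊤) :
    ⨆ N, ENNReal.ofReal (rexp (∑ n ∈ range N, a n)) = ENNReal.ofReal (rexp (∑' n, a n)) := by
  have hsum : Summable a := by
    refine summable_of_sum_range_le (c := (⨆ N, ENNReal.ofReal (rexp (∑ n ∈ range N, a n))).toReal)
      ha fun N ↦ ?_
    calc ∑ n ∈ range N, a n ≤ rexp (∑ n ∈ range N, a n) := by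
          linarith [add_one_le_exp (∑ n ∈ range N, a n)]
      _ ≤ _ := (ENNReal.ofReal_le_iff_le_toReal hfin).1 <|
          le_iSup (fun N ↦ ENNReal.ofReal (rexp (∑ n ∈ range N, a n))) N
  exact tendsto_nhds_unique (tendsto_atTop_iSup (monotone_ofReal_exp_sum_range ha)) <|
    (ENNReal.continuous_ofReal.comp Real.continuous_exp).tendsto _ |>.comp
      hsum.hasSum.tendsto_sum_nat

lemma integral_exp_tsum_of_nonneg {Ω : Type*} [MeasurableSpace Ω] {μ : Measure Ω}
    {a : ℕ → Ω → ℝ} (ha : ∀ n, Measurable (a n)) (ha0 : ∀ n ω, 0 ≤ a n ω) {L : ℝ} (hL : 0 ≤ L)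
    (hlim : Tendsto (fun N ↦ ∫⁻ ω, ENNReal.ofReal (rexp (∑ n ∈ range N, a n ω)) ∂μ) atTop
      (𝓝 (ENNReal.ofReal L))) :
    ∫ ω, rexp (∑' n, a n ω) ∂μ = L := by
  set f : ℕ → Ω → ℝ≥0∞ := fun N ω ↦ ENNReal.ofReal (rexp (∑ n ∈ range N, a n ω))
  have hf : ∀ N, Measurable (f N) := fun N ↦ by fun_prop
  have hmono : Monotone f := fun _ _ hMN ω ↦ monotone_ofReal_exp_sum_range (ha0 · ω) hMN
  have hsup : ∫⁻ ω, ⨆ N, f N ω ∂μ = ENNReal.ofReal L := by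
    rw [lintegral_iSup hf hmono]
    exact tendsto_nhds_unique (tendsto_atTop_iSup fun M N hMN ↦ lintegral_mono (hmono hMN)) hlim
  have hae : (fun ω ↦ ENNReal.ofReal (rexp (∑' n, a n ω))) =ᵐ[μ] fun ω ↦ ⨆ N, f N ω := by
    filter_upwards [ae_lt_top (Measurable.iSup hf) (hsup ▸ ENNReal.ofReal_ne_top)] with ω hω
    exact (iSup_ofReal_exp_sum_range_of_nonneg (fun n ↦ ha0 n ω) hω.ne).symm
  have hmeas : AEStronglyMeasurable (fun ω ↦ rexp (∑' n, a n ω)) μ := by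
    refine (Measurable.iSup hf).ennreal_toReal.aestronglyMeasurable.congr ?_
    filter_upwards [hae] with ω hω
    rw [← hω, ENNReal.toReal_ofReal (exp_pos _).le]
  rw [integral_eq_lintegral_of_nonneg_ae (ae_of_all _ fun ω ↦ (exp_pos _).le) hmeas,
    lintegral_congr_ae hae, hsup, ENNReal.toReal_ofReal hL]

lemma lintegral_ofReal_exp_sum_range_gaussian {Ω : Type*} [MeasurableSpace Ω] {μ : Measure Ω}
    {X : ℕ → Ω → ℝ} (hX : ∀ n, Measurable (X n)) (hindep : iIndepFun X μ)
    (hgauss : ∀ n, μ.map (X n) = gaussianReal 0 1) {k : ℕ → ℝ} (hk : ∀ n, -(1/2 : ℝ) < k n)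
    (N : ℕ) :
    ∫⁻ ω, ENNReal.ofReal (rexp (∑ n ∈ range N, -(k n * X n ω ^ 2))) ∂μ
      = ENNReal.ofReal (∏ n ∈ range N, (1 + 2 * k n) ^ (-(1/2 : ℝ))) := by
  set g : ℕ → ℝ → ℝ≥0∞ := fun n x ↦ ENNReal.ofReal (rexp (-(k n * x ^ 2)))
  have hg : ∀ n, Measurable (g n) := fun n ↦ by fun_prop
  have hfactor := lintegral_prod_eq_prod_lintegral_of_indepFun (range N)
    (fun n ω ↦ g n (X n ω)) (hindep.comp g hg) fun n ↦ (hg n).comp (hX n)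
  simp only [g, exp_sum, ← ENNReal.ofReal_prod_of_nonneg fun n _ ↦ (exp_pos _).le] at hfactor ⊢
  rw [hfactor, ENNReal.ofReal_prod_of_nonneg fun n _ ↦ (rpow_pos_of_pos (by linarith [hk n]) _).le]
  refine prod_congr rfl fun n _ ↦ ?_
  rw [← lintegral_map (hg n) (hX n), hgauss n, lintegral_ofReal_exp_neg_mul_sq_gaussianReal (hk n)]

theorem stmt_11_general {Ω : Type*} [MeasurableSpace Ω] (μ : Measure Ω)
    (X : ℕ → Ω → ℝ) (hXmeas : ∀ n, Measurable (X n))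
    (hindep : iIndepFun X μ)
    (hgauss : ∀ n, μ.map (X n) = gaussianReal 0 1)
    (k : ℕ → ℝ) (hk : ∀ n, -(1/2 : ℝ) < k n ∧ k n ≤ 0) (hsum : Summable k) :
    ∫ ω, Real.exp (-∑' n, k n * (X n ω)^2) ∂μ
      = (∏' n, (1 + 2 * k n)) ^ (-(1/2 : ℝ)) := by
  have hpos : ∀ n, 0 < 1 + 2 * k n := fun n ↦ by linarith [(hk n).1]
  have hprod := tendsto_prod_range_rpow_tprod hpos (by simpa using hsum.mul_left 2) (-(1/2))
  simp_rw [← tsum_neg]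
  refine integral_exp_tsum_of_nonneg (fun n ↦ by fun_prop)
    (fun n ω ↦ neg_nonneg.2 (mul_nonpos_of_nonpos_of_nonneg (hk n).2 (sq_nonneg _)))
    (rpow_nonneg (tprod_nonneg fun n ↦ (hpos n).le) _) ?_
  simp_rw [lintegral_ofReal_exp_sum_range_gaussian hXmeas hindep hgauss fun n ↦ (hk n).1]
  exact (ENNReal.continuous_ofReal.tendsto _).comp hprod

/-- Let `K` be a symmetric trace class operator with
`-1/2 < K ≤ 0`, given in an eigenbasis by eigenvalues `k n` (so `K` trace class
means `∑ |k n| < ∞`), and let `μ` be the associated white noise (standard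
Gaussian) measure, realized through the i.i.d. standard Gaussian coordinates
`X n = ⟨e n, ·⟩`. Then with `⟨ω, K ω⟩ = ∑ n, k n ⟨e n, ω⟩²`,
`∫ exp(-⟨ω, K ω⟩) dμ(ω) = det(Id + 2K)^{-1/2} = (∏ n, (1 + 2 k n))^{-1/2}`. -/
theorem stmt_11 {Ω : Type*} [MeasurableSpace Ω] (μ : Measure Ω) [IsProbabilityMeasure μ]
    (X : ℕ → Ω → ℝ) (hXmeas : ∀ n, Measurable (X n))
    (hindep : iIndepFun X μ)
    (hgauss : ∀ n, μ.map (X n) = gaussianReal 0 1)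
    (k : ℕ → ℝ) (hk : ∀ n, -(1/2 : ℝ) < k n ∧ k n ≤ 0) (hsum : Summable k) :
    ∫ ω, Real.exp (-∑' n, k n * (X n ω)^2) ∂μ
      = (∏' n, (1 + 2 * k n)) ^ (-(1/2 : ℝ)) :=
  stmt_11_general μ X hXmeas hindep hgauss k hk hsum
end
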